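/- Let λ_i > 0 and μ_i > 0 for i = 1, 2. If λ₁ ≤ λ₂ and μ₁ λ₂² ≥ μ₂ λ₁² (i.e. μ₁/μ₂ ≥ (λ₁/λ₂)²), then r^C_1(t) ≤ r^C_2(t) for all t > 0, i.e. τ^C_1 ≥_hr τ^C_2. -/
import Mathlib

lemma sinh_le_mul_cosh {x : ℝ} (hx : 0 ≤ x) : Real.sinh x ≤ x * Real.cosh x := by
  have key : MonotoneOn (fun s : ℝ => s * Real.cosh s - Real.sinh s) (Set.Ici 0) := by
    have hd : ∀ s : ℝ, HasDerivAt (fun s : ℝ => s * Real.cosh s - Real.sinh s)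
        (s * Real.sinh s) s := by
      intro s
      have h := ((hasDerivAt_id s).mul (Real.hasDerivAt_cosh s)).sub (Real.hasDerivAt_sinh s)
      have h2 : 1 * Real.cosh s + id s * Real.sinh s - Real.cosh s = s * Real.sinh s := by
        simp
      rw [h2] at h
      exact h
    apply monotoneOn_of_deriv_nonneg (convex_Ici 0)
    · exact (Continuous.sub (continuous_id.mul Real.continuous_cosh)
        Real.continuous_sinh).continuousOn
    · exact fun s _ => ((hd s).differentiableAt).differentiableWithinAt
    · intro s hs
      rw [(hd s).deriv]
      have hs' : 0 < s := by simpa using hs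
      exact mul_nonneg hs'.le (Real.sinh_nonneg_iff.mpr hs'.le)
  have := key Set.self_mem_Ici (Set.mem_Ici.mpr hx) hx
  simp only [Real.sinh_zero, Real.cosh_zero, mul_one, zero_mul, sub_zero, zero_sub,
    neg_zero] at this
  linarith

/-- `a sinh d ≤ d sinh a` for `0 ≤ d ≤ a`. -/
lemma mul_sinh_le {d a : ℝ} (hd : 0 ≤ d) (hda : d ≤ a) :
    a * Real.sinh d ≤ d * Real.sinh a := by
  have hid : Real.sinh a - Real.sinh d
      = 2 * Real.cosh ((a+d)/2) * Real.sinh ((a-d)/2) := by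
    have h1 := Real.sinh_add ((a+d)/2) ((a-d)/2)
    have h2 := Real.sinh_sub ((a+d)/2) ((a-d)/2)
    have e1 : (a+d)/2 + (a-d)/2 = a := by ring
    have e2 : (a+d)/2 - (a-d)/2 = d := by ring
    rw [e1] at h1; rw [e2] at h2
    rw [h1, h2]; ring
  have hcosh : Real.cosh d ≤ Real.cosh ((a+d)/2) := by
    rw [Real.cosh_le_cosh, abs_of_nonneg hd, abs_of_nonneg (by linarith)]
    linarith
  have hsinh : (a-d)/2 ≤ Real.sinh ((a-d)/2) := Real.self_le_sinh_iff.mpr (by linarith)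
  have hcd : Real.sinh d ≤ d * Real.cosh d := sinh_le_mul_cosh hd
  have hcoshpos : 0 < Real.cosh ((a+d)/2) := Real.cosh_pos _
  have step : (a - d) * Real.cosh d ≤ Real.sinh a - Real.sinh d := by
    rw [hid]
    have h3 : 2 * Real.cosh d * ((a-d)/2) ≤ 2 * Real.cosh ((a+d)/2) * Real.sinh ((a-d)/2) :=
      mul_le_mul (by linarith) hsinh (by linarith) (by positivity)
    linarith [h3]
  nlinarith [mul_nonneg (sub_nonneg.mpr hda) (sub_nonneg.mpr hcd),
    mul_le_mul_of_nonneg_left step hd]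

/-- The real hyperbolic cotangent. -/
noncomputable def coth (x : ℝ) : ℝ := Real.cosh x / Real.sinh x

lemma coth_pos {x : ℝ} (hx : 0 < x) : 0 < coth x :=
  div_pos (Real.cosh_pos _) (Real.sinh_pos_iff.mpr hx)

lemma coth_le_coth {x y : ℝ} (hx : 0 < x) (hxy : x ≤ y) : coth y ≤ coth x := by
  have hsx : 0 < Real.sinh x := Real.sinh_pos_iff.mpr hx
  have hsy : 0 < Real.sinh y := Real.sinh_pos_iff.mpr (lt_of_lt_of_le hx hxy)
  rw [coth, coth, div_le_div_iff₀ hsy hsx]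
  have h := Real.sinh_sub y x
  have h2 : 0 ≤ Real.sinh (y - x) := Real.sinh_nonneg_iff.mpr (by linarith)
  nlinarith [h, h2]

lemma mul_coth_le {x y : ℝ} (hx : 0 < x) (hxy : x ≤ y) :
    x * coth x ≤ y * coth y := by
  have hy : 0 < y := lt_of_lt_of_le hx hxy
  have hsx : 0 < Real.sinh x := Real.sinh_pos_iff.mpr hx
  have hsy : 0 < Real.sinh y := Real.sinh_pos_iff.mpr hy
  rw [coth, coth, mul_div_assoc', mul_div_assoc', div_le_div_iff₀ hsx hsy]
  have key := mul_sinh_le (d := y - x) (a := x + y) (by linarith) (by linarith)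
  rw [Real.sinh_sub, Real.sinh_add] at key
  nlinarith [key]

lemma mul_coth_le_scaled {x y t : ℝ} (hx : 0 < x) (hxy : x ≤ y) (ht : 0 < t) :
    x * coth (x * t / 2) ≤ y * coth (y * t / 2) := by
  have h := mul_coth_le (x := x * t / 2) (y := y * t / 2)
    (by positivity) (by nlinarith)
  calc x * coth (x * t / 2) = (2/t) * (x * t / 2 * coth (x * t / 2)) := by
        field_simp
      _ ≤ (2/t) * (y * t / 2 * coth (y * t / 2)) := by
        apply mul_le_mul_of_nonneg_left h (by positivity)
      _ = y * coth (y * t / 2) := by field_simp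

/-- `b_i = sqrt(μ_i² + 4 λ_i μ_i)` for the cold standby system. -/
noncomputable def bC (l m : ℝ) : ℝ := Real.sqrt (m ^ 2 + 4 * l * m)

/-- Hazard rate of the lifetime of the Markovian two-unit cold standby system. -/
noncomputable def rC (l m t : ℝ) : ℝ :=
  2 * l ^ 2 / (bC l m * coth (bC l m * t / 2) + 2 * l + m)

theorem cold_hr_sufficient (l1 l2 m1 m2 : ℝ)
    (h1 : 0 < l1) (h2 : 0 < l2) (hm1 : 0 < m1) (hm2 : 0 < m2)
    (hlam : l1 ≤ l2) (hcond : m1 * l2 ^ 2 ≥ m2 * l1 ^ 2) :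
    ∀ t > (0 : ℝ), rC l1 m1 t ≤ rC l2 m2 t := by
  intro t ht
  set b1 := bC l1 m1 with hb1def
  set b2 := bC l2 m2 with hb2def
  have hb1 : 0 < b1 := Real.sqrt_pos.mpr (by nlinarith)
  have hb2 : 0 < b2 := Real.sqrt_pos.mpr (by nlinarith)
  -- key parameter inequality: b1 * l2² ≥ b2 * l1²
  have hbkey : b2 * l1 ^ 2 ≤ b1 * l2 ^ 2 := by
    have e1 : b1 * l2 ^ 2 = Real.sqrt ((m1 ^ 2 + 4 * l1 * m1) * (l2 ^ 2) ^ 2) := by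
      rw [hb1def, bC, Real.sqrt_mul (by positivity), Real.sqrt_sq (by positivity)]
    have e2 : b2 * l1 ^ 2 = Real.sqrt ((m2 ^ 2 + 4 * l2 * m2) * (l1 ^ 2) ^ 2) := by
      rw [hb2def, bC, Real.sqrt_mul (by positivity), Real.sqrt_sq (by positivity)]
    rw [e1, e2]
    apply Real.sqrt_le_sqrt
    have A : m2 ^ 2 * l1 ^ 4 ≤ m1 ^ 2 * l2 ^ 4 := by
      nlinarith [mul_self_le_mul_self (by positivity : (0:ℝ) ≤ m2 * l1 ^ 2) hcond]
    have B : 4 * l2 * m2 * l1 ^ 4 ≤ 4 * l1 * m1 * l2 ^ 4 := by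
      have hB1 := mul_le_mul_of_nonneg_right hcond (by positivity : (0:ℝ) ≤ l1 ^ 2 * l2)
      have hB2 := mul_le_mul_of_nonneg_right hlam (by positivity : (0:ℝ) ≤ m1 * l1 * l2 ^ 3)
      nlinarith [hB1, hB2]
    nlinarith [A, B]
  set k := b2 * l1 ^ 2 / l2 ^ 2 with hkdef
  have hk : 0 < k := by positivity
  have hkb1 : k ≤ b1 := by
    rw [hkdef, div_le_iff₀ (by positivity)]
    linarith
  have hkb2 : k ≤ b2 := by
    rw [hkdef, div_le_iff₀ (by positivity)]
    exact mul_le_mul_of_nonneg_left (pow_le_pow_left₀ h1.le hlam 2) hb2.le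
  -- step (i)
  have step1 : l1 ^ 2 * (b2 * coth (b2 * t / 2)) ≤ l2 ^ 2 * (b1 * coth (b1 * t / 2)) := by
    have e : l1 ^ 2 * (b2 * coth (b2 * t / 2)) = l2 ^ 2 * (k * coth (b2 * t / 2)) := by
      rw [hkdef]; field_simp
    rw [e]
    have c1 : k * coth (b2 * t / 2) ≤ k * coth (k * t / 2) := by
      apply mul_le_mul_of_nonneg_left _ hk.le
      exact coth_le_coth (by positivity) (by nlinarith)
    have c2 : k * coth (k * t / 2) ≤ b1 * coth (b1 * t / 2) :=
      mul_coth_le_scaled hk hkb1 ht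
    have := le_trans c1 c2
    exact mul_le_mul_of_nonneg_left this (by positivity)
  -- step (ii)
  have step2 : l1 ^ 2 * (2 * l2 + m2) ≤ l2 ^ 2 * (2 * l1 + m1) := by
    nlinarith [mul_nonneg (mul_nonneg (sub_nonneg.mpr hlam) h1.le) h2.le, hcond]
  -- denominators positive
  have hc1 : 0 < coth (b1 * t / 2) := coth_pos (by positivity)
  have hc2 : 0 < coth (b2 * t / 2) := coth_pos (by positivity)
  have hD1 : 0 < b1 * coth (b1 * t / 2) + 2 * l1 + m1 := by positivity
  have hD2 : 0 < b2 * coth (b2 * t / 2) + 2 * l2 + m2 := by positivity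
  rw [rC, rC, div_le_div_iff₀ hD1 hD2]
  nlinarith [step1, step2]
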